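/- Suppose X_1, ..., X_r is a Tverberg partition of X (the constructed set) with x^i ∈ X_i for all i. Then for every 1 ≤ i ≤ r and 1 ≤ j ≤ d: |X_i ∩ A_j| = 0 if i = i(j), and |X_i ∩ A_j| = 1 otherwise. In particular |X_i| = a_i for all i. -/

import Mathlib

open Finset Set

/-- The standard basis vector `e^j` of `ℝ^d`. -/
noncomputable def stdVec (d : ℕ) (j : Fin d) : Fin d → ℝ := Pi.single j 1

/-- The set `A_j = {e^j, 2e^j, ..., (r-1)e^j}`. -/
def Aset (d r : ℕ) (j : Fin d) : Set (Fin d → ℝ) :=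
  {v | ∃ k : ℕ, 1 ≤ k ∧ k ≤ r - 1 ∧ v = (k : ℝ) • stdVec d j}

/-- The point `x^i`, with `x^i_j = 0` if `i = i(j)` and `x^i_j = -i` otherwise
(indices taken in `{1,...,r}`, so `Fin r` index `i` corresponds to `i+1`). -/
def xpt (d r : ℕ) (ι : Fin d → Fin r) (i : Fin r) : Fin d → ℝ :=
  fun j => if ι j = i then 0 else -((i : ℕ) + 1 : ℝ)

/-- The set `A = {x^1, ..., x^r}`. -/
def Apts (d r : ℕ) (ι : Fin d → Fin r) : Set (Fin d → ℝ) := Set.range (xpt d r ι)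

/-- The constructed set `X = A ∪ A_1 ∪ ⋯ ∪ A_d`. -/
def Xset (d r : ℕ) (ι : Fin d → Fin r) : Set (Fin d → ℝ) :=
  Apts d r ι ∪ ⋃ j, Aset d r j

/-- `P : Fin r → Set (Fin d → ℝ)` is a Tverberg partition of `X`:
a partition of `X` into pairwise disjoint parts whose convex hulls share a point. -/
def IsTverbergPartition (d r : ℕ) (X : Set (Fin d → ℝ))
    (P : Fin r → Set (Fin d → ℝ)) : Prop :=
  (⋃ i, P i) = X ∧ (∀ i i', i ≠ i' → Disjoint (P i) (P i')) ∧
    ∃ p : Fin d → ℝ, ∀ i, p ∈ convexHull ℝ (P i)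

/-!
The common point of the convex hulls must be the origin: for each coordinate `j`, the part
containing `x^{i(j)}` lies in `{v_j ≥ 0}`, while by pigeonhole one of the `r` parts misses the
`r - 1` points of `A_j` and hence lies in `{v_j ≤ 0}`. If `i ≠ i(j)` and `X_i` missed `A_j`, the
functional `v ↦ ∑_k v_k - (d + 1) v_j` would be positive on `X_i` (on `x^i` because `x^i_j = -i`),
so the origin could not lie in the convex hull of `X_i`. Thus each of the `r - 1` parts `X_i` with
`i ≠ i(j)` meets the `r - 1` points of `A_j`, exactly once each, and `X_{i(j)}` misses `A_j`.
Counting the points of `X_i` besides `x^i` then gives `|X_i| = 1 + #{j | i(j) ≠ i} = a_i`.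
-/

open scoped Function

lemma sum_ncard_inter_eq_ncard {ι α : Type*} [Fintype ι] {P : ι → Set α} {S : Set α}
    (hS : S.Finite) (hcover : S ⊆ ⋃ i, P i) (hdisj : Pairwise (Disjoint on P)) :
    ∑ i, (P i ∩ S).ncard = S.ncard := by
  have hdisj' : Pairwise (Disjoint on fun i => P i ∩ S) := fun i j hij =>
    (hdisj hij).mono inter_subset_left inter_subset_left
  rw [← finsum_eq_sum_of_fintype,
    ← ncard_iUnion_of_finite (fun i => hS.subset inter_subset_right) hdisj',
    ← iUnion_inter, inter_eq_right.2 hcover]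

lemma eq_ite_of_sum_eq_card_sub_one {α : Type*} [Fintype α] [DecidableEq α] {f : α → ℕ} {a : α}
    (hf : ∀ i, a ≠ i → 1 ≤ f i) (hsum : ∑ i, f i = Fintype.card α - 1) (i : α) :
    f i = if a = i then 0 else 1 := by
  have hle : ∀ i ∈ Finset.univ, (if a = i then 0 else 1) ≤ f i := fun i _ => by
    split_ifs with h
    exacts [Nat.zero_le _, hf i h]
  have hsum' : ∑ i, (if a = i then 0 else 1) = Fintype.card α - 1 := by
    simp [Finset.sum_ite, Finset.filter_ne]
  exact ((Finset.sum_eq_sum_iff_of_le hle).1 (hsum'.trans hsum.symm) i (mem_univ i)).symm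

section Construction

variable {d r : ℕ}

lemma Aset_apply_of_ne {j k : Fin d} {v : Fin d → ℝ} (hv : v ∈ Aset d r j) (hk : k ≠ j) :
    v k = 0 := by
  obtain ⟨n, -, -, rfl⟩ := hv
  simp [stdVec, hk]

lemma one_le_Aset_apply_self {j : Fin d} {v : Fin d → ℝ} (hv : v ∈ Aset d r j) : 1 ≤ v j := by
  obtain ⟨n, hn, -, rfl⟩ := hv
  simpa [stdVec] using hn

lemma Aset_apply_nonneg {j : Fin d} {v : Fin d → ℝ} (hv : v ∈ Aset d r j) (k : Fin d) :
    0 ≤ v k := by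
  by_cases hk : k = j
  · subst hk
    linarith [one_le_Aset_apply_self hv]
  · rw [Aset_apply_of_ne hv hk]

lemma pairwise_disjoint_Aset : Pairwise (Disjoint on Aset d r) := fun j k hjk =>
  Set.disjoint_left.2 fun _ hj hk => by
    linarith [one_le_Aset_apply_self hj, Aset_apply_of_ne hk hjk]

lemma Aset_eq_image (j : Fin d) :
    Aset d r j = (fun n : ℕ => (n : ℝ) • stdVec d j) '' Set.Icc 1 (r - 1) := by
  ext v
  simp only [Aset, Set.mem_ofPred_eq, Set.mem_image, Set.mem_Icc]
  exact ⟨fun ⟨n, h1, h2, h⟩ => ⟨n, ⟨h1, h2⟩, h.symm⟩, fun ⟨n, ⟨h1, h2⟩, h⟩ => ⟨n, h1, h2, h.symm⟩⟩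

lemma finite_Aset (j : Fin d) : (Aset d r j).Finite := by
  rw [Aset_eq_image]
  exact (Set.finite_Icc 1 (r - 1)).image _

lemma ncard_Aset (j : Fin d) : (Aset d r j).ncard = r - 1 := by
  have hinj : Function.Injective fun n : ℕ => (n : ℝ) • stdVec d j := fun m n h => by
    simpa [stdVec] using congrFun h j
  rw [Aset_eq_image, ncard_image_of_injective _ hinj, Set.ncard_Icc_nat]
  omega

lemma finite_Xset (ι : Fin d → Fin r) : (Xset d r ι).Finite :=
  (finite_range _).union (finite_iUnion finite_Aset)

lemma xpt_apply_self (ι : Fin d → Fin r) (j : Fin d) : xpt d r ι (ι j) j = 0 := if_pos rfl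

lemma xpt_apply_of_ne {ι : Fin d → Fin r} {i : Fin r} {j : Fin d} (h : ι j ≠ i) :
    xpt d r ι i j = -((i : ℕ) + 1 : ℝ) := if_neg h

lemma neg_le_xpt_apply (ι : Fin d → Fin r) (i : Fin r) (j : Fin d) :
    -((i : ℕ) + 1 : ℝ) ≤ xpt d r ι i j := by
  unfold xpt
  split_ifs <;> linarith

lemma xpt_apply_nonpos (ι : Fin d → Fin r) (i : Fin r) (j : Fin d) : xpt d r ι i j ≤ 0 := by
  unfold xpt
  split_ifs <;> linarith

lemma xpt_notMem_Aset (ι : Fin d → Fin r) (i : Fin r) (j : Fin d) :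
    xpt d r ι i ∉ Aset d r j := fun h => by
  linarith [one_le_Aset_apply_self h, xpt_apply_nonpos ι i j]

end Construction

section Partition

variable {d r : ℕ} {ι : Fin d → Fin r} {P : Fin r → Set (Fin d → ℝ)}
  (hcover : ⋃ i, P i = Xset d r ι) (hdisj : Pairwise (Disjoint on P))
include hcover hdisj

lemma eq_xpt_or_mem_Aset_of_mem (hx : ∀ i, xpt d r ι i ∈ P i) {i : Fin r} {y : Fin d → ℝ}
    (hy : y ∈ P i) : y = xpt d r ι i ∨ ∃ j, y ∈ Aset d r j := by
  have hyX : y ∈ Xset d r ι := hcover ▸ mem_iUnion_of_mem i hy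
  rcases hyX with ⟨i', rfl⟩ | hyA
  · left
    by_contra hne
    have hi : i' ≠ i := fun h => hne (h ▸ rfl)
    exact Set.disjoint_left.1 (hdisj hi) (hx i') hy
  · exact Or.inr (mem_iUnion.1 hyA)

lemma sum_ncard_inter_Aset (j : Fin d) : ∑ i, (P i ∩ Aset d r j).ncard = r - 1 := by
  rw [sum_ncard_inter_eq_ncard (finite_Aset j) ?_ hdisj, ncard_Aset]
  rw [hcover]
  exact subset_union_of_subset_right (subset_iUnion _ j) _

lemma exists_inter_Aset_eq_empty (j : Fin d) : ∃ i, P i ∩ Aset d r j = ∅ := by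
  by_contra! hne
  have hr : 1 ≤ r := Fin.pos (ι j)
  have hge : ∑ _i : Fin r, 1 ≤ ∑ i, (P i ∩ Aset d r j).ncard :=
    Finset.sum_le_sum fun i _ =>
      (hne i).ncard_pos ((finite_Aset j).subset inter_subset_right)
  rw [sum_ncard_inter_Aset hcover hdisj, Finset.sum_const, card_univ, Fintype.card_fin,
    smul_eq_mul, mul_one] at hge
  omega

lemma common_point_eq_zero (hx : ∀ i, xpt d r ι i ∈ P i) {p : Fin d → ℝ}
    (hp : ∀ i, p ∈ convexHull ℝ (P i)) : p = 0 := by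
  funext j
  obtain ⟨i₀, hi₀⟩ := exists_inter_Aset_eq_empty hcover hdisj j
  have hcoord := (LinearMap.proj j : (Fin d → ℝ) →ₗ[ℝ] ℝ).isLinear
  have hnonneg : P (ι j) ⊆ {v | 0 ≤ v j} := by
    intro y hy
    rcases eq_xpt_or_mem_Aset_of_mem hcover hdisj hx hy with rfl | ⟨k, hk⟩
    · exact (xpt_apply_self ι j).ge
    · exact Aset_apply_nonneg hk j
  have hnonpos : P i₀ ⊆ {v | v j ≤ 0} := by
    intro y hy
    rcases eq_xpt_or_mem_Aset_of_mem hcover hdisj hx hy with rfl | ⟨k, hk⟩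
    · exact xpt_apply_nonpos ι i₀ j
    · have hjk : j ≠ k := by
        rintro rfl
        exact (eq_empty_iff_forall_notMem.1 hi₀) y ⟨hy, hk⟩
      exact (Aset_apply_of_ne hk hjk).le
  exact le_antisymm (convexHull_min hnonpos (convex_halfSpace_le hcoord 0) (hp i₀))
    (convexHull_min hnonneg (convex_halfSpace_ge hcoord 0) (hp (ι j)))

lemma inter_Aset_nonempty (hx : ∀ i, xpt d r ι i ∈ P i) {i : Fin r} {j : Fin d}
    (h0 : (0 : Fin d → ℝ) ∈ convexHull ℝ (P i)) (hij : ι j ≠ i) :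
    (P i ∩ Aset d r j).Nonempty := by
  by_contra hempty
  have hlin : IsLinearMap ℝ fun v : Fin d → ℝ => ∑ k, v k - (d + 1) * v j :=
    ⟨fun u v => by simp only [Pi.add_apply, Finset.sum_add_distrib]; ring,
      fun c v => by simp only [Pi.smul_apply, smul_eq_mul, ← Finset.mul_sum]; ring⟩
  have hpos : P i ⊆ {v | 0 < ∑ k, v k - (d + 1) * v j} := by
    intro y hy
    rcases eq_xpt_or_mem_Aset_of_mem hcover hdisj hx hy with rfl | ⟨k, hk⟩
    · have hsum : ∑ _k : Fin d, -((i : ℕ) + 1 : ℝ) ≤ ∑ k, xpt d r ι i k :=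
        Finset.sum_le_sum fun k _ => neg_le_xpt_apply ι i k
      simp only [Finset.sum_const, card_univ, Fintype.card_fin, nsmul_eq_mul] at hsum
      simp only [Set.mem_ofPred_eq, xpt_apply_of_ne hij]
      linarith
    · have hkj : j ≠ k := by
        rintro rfl
        exact hempty ⟨y, hy, hk⟩
      have hk1 : 1 ≤ ∑ l, y l := (one_le_Aset_apply_self hk).trans
        (Finset.single_le_sum (fun l _ => Aset_apply_nonneg hk l) (mem_univ k))
      simp only [Set.mem_ofPred_eq, Aset_apply_of_ne hk hkj]
      linarith
  simpa using convexHull_min hpos (convex_halfSpace_gt hlin 0) h0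

lemma ncard_inter_Aset {j : Fin d} (hne : ∀ i, ι j ≠ i → (P i ∩ Aset d r j).Nonempty)
    (i : Fin r) : (P i ∩ Aset d r j).ncard = if ι j = i then 0 else 1 := by
  classical
  refine eq_ite_of_sum_eq_card_sub_one (f := fun i => (P i ∩ Aset d r j).ncard)
    (fun i hi => (hne i hi).ncard_pos ((finite_Aset j).subset inter_subset_right)) ?_ i
  rw [sum_ncard_inter_Aset hcover hdisj, Fintype.card_fin]

lemma ncard_eq_sum_ncard_inter_Aset_add_one (hx : ∀ i, xpt d r ι i ∈ P i) (i : Fin r) :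
    (P i).ncard = ∑ j, (P i ∩ Aset d r j).ncard + 1 := by
  have hfin : (P i).Finite := (finite_Xset ι).subset (hcover ▸ subset_iUnion P i)
  have hcoverA : P i \ {xpt d r ι i} ⊆ ⋃ j, Aset d r j := by
    rintro y ⟨hy, hyx⟩
    rcases eq_xpt_or_mem_Aset_of_mem hcover hdisj hx hy with rfl | hA
    · exact absurd rfl hyx
    · exact mem_iUnion.2 hA
  have hinter : ∀ j, Aset d r j ∩ (P i \ {xpt d r ι i}) = P i ∩ Aset d r j := fun j => by
    rw [← inter_sdiff_assoc, sdiff_singleton_eq_self fun h => xpt_notMem_Aset ι i j h.1,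
      inter_comm]
  rw [← ncard_sdiff_singleton_add_one (hx i) hfin,
    ← sum_ncard_inter_eq_ncard hfin.sdiff hcoverA pairwise_disjoint_Aset]
  simp only [hinter]

end Partition

theorem part_meets_Aj_general (d r : ℕ)
    (a : Fin r → ℕ) (hpos : ∀ i, 1 ≤ a i) (hle : ∀ i, a i ≤ d + 1)
    (ι : Fin d → Fin r)
    (hι : ∀ i, (Finset.univ.filter fun j => ι j = i).card = d + 1 - a i)
    (P : Fin r → Set (Fin d → ℝ))
    (hTP : IsTverbergPartition d r (Xset d r ι) P)
    (hx : ∀ i, xpt d r ι i ∈ P i) :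
    (∀ i, ∀ j, (P i ∩ Aset d r j).ncard = if ι j = i then 0 else 1) ∧
    (∀ i, (P i).ncard = a i) := by
  obtain ⟨hcover, hdisj, p, hp⟩ := hTP
  obtain rfl : p = 0 := common_point_eq_zero hcover hdisj hx hp
  have hAj : ∀ i j, (P i ∩ Aset d r j).ncard = if ι j = i then 0 else 1 := fun _ _ =>
    ncard_inter_Aset hcover hdisj (fun i' h => inter_Aset_nonempty hcover hdisj hx (hp i') h) _
  refine ⟨hAj, fun i => ?_⟩
  have hcount := card_filter_add_card_filter_not (s := univ) fun j => ι j = i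
  rw [hι i, card_univ, Fintype.card_fin] at hcount
  rw [ncard_eq_sum_ncard_inter_Aset_add_one hcover hdisj hx i]
  simp only [hAj, Finset.sum_ite, Finset.sum_const_zero, Finset.sum_const, smul_eq_mul, mul_one,
    zero_add]
  have := hpos i
  have := hle i
  omega

/-- Corollary 3.3: if `X_1,...,X_r` is a Tverberg partition of the constructed set
with `x^i ∈ X_i` for all `i`, then `|X_i ∩ A_j| = 0` if `i = i(j)` and `= 1`
otherwise; in particular `|X_i| = a_i`. -/
theorem part_meets_Aj (d r : ℕ) (hd : 1 ≤ d) (hr : 1 ≤ r)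
    (a : Fin r → ℕ) (hpos : ∀ i, 1 ≤ a i) (hle : ∀ i, a i ≤ d + 1)
    (hsum : ∑ i, a i = (d + 1) * (r - 1) + 1)
    (ι : Fin d → Fin r)
    (hι : ∀ i, (Finset.univ.filter fun j => ι j = i).card = d + 1 - a i)
    (P : Fin r → Set (Fin d → ℝ))
    (hTP : IsTverbergPartition d r (Xset d r ι) P)
    (hx : ∀ i, xpt d r ι i ∈ P i) :
    (∀ i, ∀ j, (P i ∩ Aset d r j).ncard = if ι j = i then 0 else 1) ∧
    (∀ i, (P i).ncard = a i) :=
  part_meets_Aj_general d r a hpos hle ι hι P hTP hx
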